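/- Let (X_n) be a time-homogeneous Markov chain on a countable state space S such that the distribution of X_n converges (in total variation) to a fixed distribution π irrespective of the starting distribution. Suppose that for some α ∈ (0,1] and some n ∈ ℕ, for each pair of states x, y ∈ S there exists a coupling ((X_m, Y_m))_{m∈ℕ₀} of two copies of the chain started at x and y respectively whose first meeting time τ satisfies P(τ ≤ n) ≥ α. Then the mixing time satisfies t_mix ≤ n·⌈log(1/4)/log(1 − α/2)⌉. -/

import Mathlib

/-!
A coupling here only prescribes the law of each coordinate, so the copies need not move
together after meeting. Instead fix `B` and use the space-time harmonic function
`(m, s) ↦ P^(n-m)(s, B)`. At a meeting point at time `m ≤ n`, either `P^(n-m)(·, B) ≥ 1/2` or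
`P^(n-m)(·, Bᶜ) ≥ 1/2`; by optional stopping, the copy from `y` reaches the first region with
probability at most `2 P^n(y, B)`, and the copy from `x` the second with probability at most
`2 P^n(x, Bᶜ)`. Hence `α ≤ 2 (1 - P^n(x, B)) + 2 P^n(y, B)`, i.e.
`‖P^n(x, ·) - P^n(y, ·)‖ ≤ 1 - α/2`, and Dobrushin's contraction estimate gives
`d(nk) ≤ (1 - α/2)^k`.
-/

open MeasureTheory Filter Topology
open scoped ENNReal

/-- The distribution at time `n` of the time-homogeneous Markov chain with transition
kernel `K` started at `x`, i.e. `P^n(x, ·)`. -/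
noncomputable def stepDist {S : Type*} (K : S → PMF S) (x : S) : ℕ → PMF S
  | 0 => PMF.pure x
  | n + 1 => (stepDist K x n).bind K

/-- Total variation distance between two probability distributions on a countable space:
`sup_{A ⊆ S} |μ(A) − ν(A)|`. -/
noncomputable def tvDist {S : Type*} (μ ν : PMF S) : ℝ :=
  ⨆ A : Set S, |(∑' a : A, μ ↑a).toReal - (∑' a : A, ν ↑a).toReal|

open Classical in
/-- `X` is a copy, on the probability space `(Ω, Pr)`, of the time-homogeneous Markov chain
with transition kernel `K` started at `x`: all finite-dimensional distributions are the
ones prescribed by `x` and `K`. -/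
def IsCopy {S Ω : Type*} [MeasurableSpace Ω] (Pr : Measure Ω)
    (K : S → PMF S) (x : S) (X : ℕ → Ω → S) : Prop :=
  ∀ n : ℕ, ∀ path : ℕ → S,
    Pr {ω | ∀ i ≤ n, X i ω = path i}
      = (if path 0 = x then (1 : ℝ≥0∞) else 0) *
        ∏ i ∈ Finset.range n, K (path i) (path (i + 1))

/-- The distribution at time `n` of the Markov chain with kernel `K` started from the
initial distribution `μ`. -/
noncomputable def stepDistFrom {S : Type*} (K : S → PMF S) (μ : PMF S) : ℕ → PMF S
  | 0 => μ
  | n + 1 => (stepDistFrom K μ n).bind K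

section

variable {S : Type*}

namespace PMF

lemma toOuterMeasure_apply_le_one (μ : PMF S) (A : Set S) : μ.toOuterMeasure A ≤ 1 :=
  (μ.toOuterMeasure.mono A.subset_univ).trans_eq
    ((μ.toOuterMeasure_apply_eq_one_iff _).2 (Set.subset_univ _))

lemma toOuterMeasure_apply_ne_top (μ : PMF S) (A : Set S) : μ.toOuterMeasure A ≠ ⊤ :=
  ne_top_of_le_ne_top ENNReal.one_ne_top (μ.toOuterMeasure_apply_le_one A)

lemma toReal_toOuterMeasure_le_one (μ : PMF S) (A : Set S) :
    (μ.toOuterMeasure A).toReal ≤ 1 :=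
  ENNReal.toReal_le_of_le_ofReal zero_le_one (by simpa using μ.toOuterMeasure_apply_le_one A)

lemma toOuterMeasure_add_compl (μ : PMF S) (A : Set S) :
    μ.toOuterMeasure A + μ.toOuterMeasure Aᶜ = 1 := by
  rw [toOuterMeasure_apply, toOuterMeasure_apply, ← ENNReal.tsum_add]
  simp [Set.indicator_self_add_compl_apply, μ.tsum_coe]

lemma toReal_toOuterMeasure_add_compl (μ : PMF S) (A : Set S) :
    (μ.toOuterMeasure A).toReal + (μ.toOuterMeasure Aᶜ).toReal = 1 := by
  rw [← ENNReal.toReal_add (μ.toOuterMeasure_apply_ne_top A) (μ.toOuterMeasure_apply_ne_top _),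
    toOuterMeasure_add_compl, ENNReal.toReal_one]

lemma tsum_tsub_ne_top (μ ν : PMF S) : ∑' s, (μ s - ν s) ≠ ⊤ :=
  ne_top_of_le_ne_top μ.tsum_coe_ne_top (ENNReal.tsum_le_tsum fun _ => tsub_le_self)

end PMF

lemma tvDist_eq_iSup_toOuterMeasure (μ ν : PMF S) :
    tvDist μ ν
      = ⨆ A : Set S, |(μ.toOuterMeasure A).toReal - (ν.toOuterMeasure A).toReal| := by
  simp only [tvDist, PMF.toOuterMeasure_apply, tsum_subtype]

lemma sub_le_tvDist (μ ν : PMF S) (A : Set S) :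
    (μ.toOuterMeasure A).toReal - (ν.toOuterMeasure A).toReal ≤ tvDist μ ν := by
  have hbdd : BddAbove (Set.range fun A : Set S =>
      |(μ.toOuterMeasure A).toReal - (ν.toOuterMeasure A).toReal|) := by
    refine ⟨1, Set.forall_mem_range.2 fun B => abs_sub_le_iff.2 ⟨?_, ?_⟩⟩ <;>
      linarith [μ.toReal_toOuterMeasure_le_one B, ν.toReal_toOuterMeasure_le_one B,
        (μ.toOuterMeasure B).toReal_nonneg, (ν.toOuterMeasure B).toReal_nonneg]
  rw [tvDist_eq_iSup_toOuterMeasure]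
  exact (le_abs_self _).trans (le_ciSup hbdd A)

/-- By passing to complements, a one-sided bound suffices. -/
lemma tvDist_le_of_forall_sub_le {μ ν : PMF S} {c : ℝ}
    (h : ∀ A, (μ.toOuterMeasure A).toReal - (ν.toOuterMeasure A).toReal ≤ c) :
    tvDist μ ν ≤ c := by
  have hc : 0 ≤ c := by simpa using h ∅
  rw [tvDist_eq_iSup_toOuterMeasure]
  refine Real.iSup_le (fun A => abs_sub_le_iff.2 ⟨h A, ?_⟩) hc
  linarith [h Aᶜ, μ.toReal_toOuterMeasure_add_compl A, ν.toReal_toOuterMeasure_add_compl A]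

lemma tvDist_le_one (μ ν : PMF S) : tvDist μ ν ≤ 1 :=
  tvDist_le_of_forall_sub_le fun A => by
    linarith [μ.toReal_toOuterMeasure_le_one A, (ν.toOuterMeasure A).toReal_nonneg]

lemma tvDist_triangle (μ ν κ : PMF S) : tvDist μ κ ≤ tvDist μ ν + tvDist ν κ :=
  tvDist_le_of_forall_sub_le fun A => by linarith [sub_le_tvDist μ ν A, sub_le_tvDist ν κ A]

lemma toReal_tsum_tsub_le_tvDist (μ ν : PMF S) :
    (∑' s, (μ s - ν s)).toReal ≤ tvDist μ ν := by
  set A : Set S := {s | ν s < μ s}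
  have hsplit : ν.toOuterMeasure A + ∑' s, (μ s - ν s) = μ.toOuterMeasure A := by
    rw [PMF.toOuterMeasure_apply, PMF.toOuterMeasure_apply, ← ENNReal.tsum_add]
    refine tsum_congr fun s => ?_
    by_cases hs : ν s < μ s
    · simp [A, hs, add_tsub_cancel_of_le hs.le]
    · simp [A, hs, tsub_eq_zero_of_le (not_lt.1 hs)]
  have := sub_le_tvDist μ ν A
  rw [← hsplit, ENNReal.toReal_add (ν.toOuterMeasure_apply_ne_top A) (μ.tsum_tsub_ne_top ν)]
    at this
  linarith

/-- The core of Dobrushin's contraction estimate: `μ` and `ν` agree up to the excess mass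
`∑ (μ - ν)⁺ = ∑ (ν - μ)⁺`, on which `F` varies by at most `b`. -/
lemma PMF.tsum_mul_le_tsum_mul_add (μ ν : PMF S) {F : S → ℝ≥0∞} {b : ℝ≥0∞}
    (hF : ∀ s u, F s ≤ F u + b) (hF_ne_top : ∀ s, F s ≠ ⊤) :
    ∑' s, μ s * F s ≤ ∑' s, ν s * F s + (∑' s, (μ s - ν s)) * b := by
  set t := ∑' s, (μ s - ν s)
  have hmax : ∀ s, μ s + (ν s - μ s) = ν s + (μ s - ν s) := fun s => by
    rw [add_tsub_eq_max, add_tsub_eq_max, max_comm]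
  have hmass : ∑' s, (ν s - μ s) = t := by
    have h := congrArg (fun f : S → ℝ≥0∞ => ∑' s, f s) (funext hmax)
    simp only [ENNReal.tsum_add, μ.tsum_coe, ν.tsum_coe] at h
    exact (ENNReal.add_right_inj ENNReal.one_ne_top).1 h
  set m := ⨅ u, F u
  have hm : ∀ s, F s ≤ m + b := fun s => by rw [ENNReal.iInf_add]; exact le_iInf (hF s)
  have htm : t * m ≠ ⊤ := by
    obtain ⟨s, -⟩ := μ.support_nonempty
    exact ENNReal.mul_ne_top (μ.tsum_tsub_ne_top ν)
      (ne_top_of_le_ne_top (hF_ne_top s) (iInf_le _ s))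
  refine (ENNReal.add_le_add_iff_right htm).1 ?_
  calc ∑' s, μ s * F s + t * m
      = ∑' s, μ s * F s + ∑' s, (ν s - μ s) * m := by rw [ENNReal.tsum_mul_right, hmass]
    _ ≤ ∑' s, μ s * F s + ∑' s, (ν s - μ s) * F s := by gcongr with s; exact iInf_le _ s
    _ = ∑' s, ν s * F s + ∑' s, (μ s - ν s) * F s := by
        simp only [← ENNReal.tsum_add, ← add_mul, hmax]
    _ ≤ ∑' s, ν s * F s + ∑' s, (μ s - ν s) * (m + b) := by gcongr with s; exact hm s
    _ = ∑' s, ν s * F s + t * b + t * m := by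
        rw [ENNReal.tsum_mul_right, mul_add]; ring

lemma tvDist_bind_le (μ ν : PMF S) (g : S → PMF S) {β : ℝ} (hβ : 0 ≤ β)
    (hg : ∀ s u, tvDist (g s) (g u) ≤ β) :
    tvDist (μ.bind g) (ν.bind g) ≤ β * tvDist μ ν := by
  refine tvDist_le_of_forall_sub_le fun A => ?_
  have hF : ∀ s u, (g s).toOuterMeasure A ≤ (g u).toOuterMeasure A + ENNReal.ofReal β := by
    intro s u
    calc (g s).toOuterMeasure A = ENNReal.ofReal ((g s).toOuterMeasure A).toReal :=
          (ENNReal.ofReal_toReal ((g s).toOuterMeasure_apply_ne_top A)).symm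
      _ ≤ ENNReal.ofReal (((g u).toOuterMeasure A).toReal + β) :=
          ENNReal.ofReal_le_ofReal (by linarith [sub_le_tvDist (g s) (g u) A, hg s u])
      _ = (g u).toOuterMeasure A + ENNReal.ofReal β := by
          rw [ENNReal.ofReal_add ENNReal.toReal_nonneg hβ,
            ENNReal.ofReal_toReal ((g u).toOuterMeasure_apply_ne_top A)]
  have key := μ.tsum_mul_le_tsum_mul_add ν hF fun s => (g s).toOuterMeasure_apply_ne_top A
  rw [← PMF.toOuterMeasure_bind_apply, ← PMF.toOuterMeasure_bind_apply] at key
  have hexcess := ENNReal.mul_ne_top (μ.tsum_tsub_ne_top ν) (ENNReal.ofReal_ne_top (r := β))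
  have hreal := ENNReal.toReal_mono
    (ENNReal.add_ne_top.2 ⟨(ν.bind g).toOuterMeasure_apply_ne_top A, hexcess⟩) key
  rw [ENNReal.toReal_add ((ν.bind g).toOuterMeasure_apply_ne_top A) hexcess,
    ENNReal.toReal_mul, ENNReal.toReal_ofReal hβ] at hreal
  nlinarith [toReal_tsum_tsub_le_tvDist μ ν]

section Chain

variable (K : S → PMF S)

lemma stepDist_eq_stepDistFrom_pure (x : S) (m : ℕ) :
    stepDist K x m = stepDistFrom K (PMF.pure x) m := by
  induction m with
  | zero => rfl
  | succ m ih => rw [stepDist, stepDistFrom, ih]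

lemma stepDistFrom_add (μ : PMF S) (a b : ℕ) :
    stepDistFrom K μ (a + b) = stepDistFrom K (stepDistFrom K μ a) b := by
  induction b with
  | zero => rfl
  | succ b ih => rw [← add_assoc, stepDistFrom, stepDistFrom, ih]

lemma stepDistFrom_eq_bind (μ : PMF S) (m : ℕ) :
    stepDistFrom K μ m = μ.bind fun s => stepDist K s m := by
  induction m with
  | zero => exact (PMF.bind_pure μ).symm
  | succ m ih => simp only [stepDistFrom, stepDist, ih, PMF.bind_bind]

lemma stepDist_succ' (x : S) (m : ℕ) :
    stepDist K x (m + 1) = (K x).bind fun s => stepDist K s m := by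
  rw [stepDist_eq_stepDistFrom_pure, add_comm, stepDistFrom_add, stepDistFrom_eq_bind]
  simp [stepDistFrom, stepDist_eq_stepDistFrom_pure]

lemma tvDist_stepDistFrom_mul_le {N : ℕ} {β : ℝ} (hβ : 0 ≤ β)
    (hN : ∀ s t, tvDist (stepDist K s N) (stepDist K t N) ≤ β) (μ ν : PMF S) (k : ℕ) :
    tvDist (stepDistFrom K μ (N * k)) (stepDistFrom K ν (N * k)) ≤ β ^ k := by
  induction k with
  | zero => rw [pow_zero]; exact tvDist_le_one _ _
  | succ k ih =>
    rw [mul_add_one, stepDistFrom_add, stepDistFrom_add, stepDistFrom_eq_bind _ _ N,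
      stepDistFrom_eq_bind _ (stepDistFrom K ν (N * k)) N, pow_succ']
    exact (tvDist_bind_le _ _ _ hβ hN).trans (mul_le_mul_of_nonneg_left ih hβ)

/-- Compare with the chain started from its own time-`j` law, which tends to `π`. -/
lemma tvDist_stepDist_mul_le {π : PMF S}
    (hconv : ∀ μ₀ : PMF S, Tendsto (fun m => tvDist (stepDistFrom K μ₀ m) π) atTop (𝓝 0))
    {N : ℕ} {β : ℝ} (hβ : 0 ≤ β)
    (hN : ∀ s t, tvDist (stepDist K s N) (stepDist K t N) ≤ β) (x : S) (k : ℕ) :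
    tvDist (stepDist K x (N * k)) π ≤ β ^ k := by
  set μ₀ := PMF.pure x
  have hlim : Tendsto (fun j => β ^ k + tvDist (stepDistFrom K μ₀ (j + N * k)) π) atTop
      (𝓝 (β ^ k)) := by
    simpa using ((hconv μ₀).comp (tendsto_add_atTop_nat (N * k))).const_add (β ^ k)
  refine ge_of_tendsto' hlim fun j => ?_
  calc tvDist (stepDist K x (N * k)) π
      ≤ tvDist (stepDistFrom K μ₀ (N * k)) (stepDistFrom K μ₀ (j + N * k))
        + tvDist (stepDistFrom K μ₀ (j + N * k)) π := by
        rw [stepDist_eq_stepDistFrom_pure]; exact tvDist_triangle _ _ _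
    _ ≤ β ^ k + tvDist (stepDistFrom K μ₀ (j + N * k)) π := by
        rw [stepDistFrom_add K μ₀ j]
        gcongr
        exact tvDist_stepDistFrom_mul_le K hβ hN _ _ k

end Chain

section Paths

variable (K : S → PMF S)

open Classical in
noncomputable def pathWeight (x : S) {N : ℕ} (p : Fin (N + 1) → S) : ℝ≥0∞ :=
  (if p 0 = x then 1 else 0) * ∏ i : Fin N, K (p i.castSucc) (p i.succ)

lemma pathWeight_of_ne {x : S} {N : ℕ} {p : Fin (N + 1) → S} (h : p 0 ≠ x) :
    pathWeight K x p = 0 := by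
  simp [pathWeight, h]

open Classical in
lemma pathWeight_cons (x z : S) {N : ℕ} (q : Fin (N + 1) → S) :
    pathWeight K x (Fin.cons z q : Fin (N + 2) → S)
      = (if z = x then 1 else 0) * (K z (q 0) * pathWeight K (q 0) q) := by
  simp only [pathWeight, Fin.prod_univ_succ, Fin.cons_zero, Fin.castSucc_zero,
    ← Fin.succ_castSucc, Fin.cons_succ, if_true, one_mul]

lemma tsum_pathWeight_succ_mul (x : S) {N : ℕ} (G : (Fin (N + 2) → S) → ℝ≥0∞) :
    ∑' p : Fin (N + 2) → S, pathWeight K x p * G p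
      = ∑' s, K x s * ∑' q : Fin (N + 1) → S, pathWeight K s q * G (Fin.cons x q) := by
  have hfirst : ∀ q : Fin (N + 1) → S,
      K x (q 0) * pathWeight K (q 0) q = ∑' s, K x s * pathWeight K s q := fun q =>
    (tsum_eq_single (f := fun s => K x s * pathWeight K s q) (q 0) fun s hs => by
      rw [pathWeight_of_ne K (Ne.symm hs), mul_zero]).symm
  calc ∑' p : Fin (N + 2) → S, pathWeight K x p * G p
      = ∑' (z : S) (q : Fin (N + 1) → S), pathWeight K x (Fin.cons z q) * G (Fin.cons z q) := by
        rw [← (Fin.consEquiv fun _ => S).tsum_eq]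
        exact ENNReal.tsum_prod'
    _ = ∑' q : Fin (N + 1) → S, K x (q 0) * pathWeight K (q 0) q * G (Fin.cons x q) := by
        rw [tsum_eq_single x fun z hz => by simp [pathWeight_cons, hz]]
        simp [pathWeight_cons, mul_assoc]
    _ = ∑' s, K x s * ∑' q : Fin (N + 1) → S, pathWeight K s q * G (Fin.cons x q) := by
        simp only [hfirst, ← ENNReal.tsum_mul_right, ← ENNReal.tsum_mul_left, mul_assoc]
        exact ENNReal.tsum_comm

lemma tsum_pathWeight (x : S) (N : ℕ) : ∑' p : Fin (N + 1) → S, pathWeight K x p = 1 := by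
  induction N generalizing x with
  | zero =>
    rw [← (Equiv.funUnique (Fin 1) S).symm.tsum_eq, tsum_eq_single x fun s hs => by
      simp [pathWeight, hs]]
    simp [pathWeight]
  | succ N ih =>
    simpa [ih] using tsum_pathWeight_succ_mul K x (N := N) fun _ => 1

end Paths

section Copies

variable (K : S → PMF S) {Ω : Type*} [MeasurableSpace Ω] {Pr : Measure Ω} {x : S}
  {X : ℕ → Ω → S}

lemma IsCopy.measure_cylinder (hX : IsCopy Pr K x X) {N : ℕ} (p : Fin (N + 1) → S) :
    Pr {ω | ∀ i : Fin (N + 1), X i ω = p i} = pathWeight K x p := by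
  set path : ℕ → S := fun i => p ⟨min i N, by omega⟩
  have hpath : ∀ (i : ℕ) (hi : i < N + 1), path i = p ⟨i, hi⟩ := fun i hi =>
    congrArg p (Fin.ext (min_eq_left (Nat.le_of_lt_succ hi)))
  have hset : {ω | ∀ i : Fin (N + 1), X i ω = p i} = {ω | ∀ i ≤ N, X i ω = path i} := by
    ext ω
    exact ⟨fun h i hi => (h ⟨i, by omega⟩).trans (hpath i (by omega)).symm,
      fun h i => (h i (by omega)).trans (hpath i i.2)⟩
  rw [hset, hX N path, pathWeight, hpath 0 N.succ_pos,
    ← Fin.prod_univ_eq_prod_range (fun i => K (path i) (path (i + 1)))]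
  congr 1
  exact Finset.prod_congr rfl fun i _ => by
    rw [hpath i (by omega), hpath (i + 1) (by omega)]; rfl

lemma IsCopy.measure_exists_mem_le [Countable S] (hX : IsCopy Pr K x X) (N : ℕ)
    (bad : ℕ → Set S) :
    Pr {ω | ∃ m ≤ N, X m ω ∈ bad m}
      ≤ ∑' p : Fin (N + 1) → S,
          pathWeight K x p *
            {p : Fin (N + 1) → S | ∃ i : Fin (N + 1), p i ∈ bad i}.indicator 1 p := by
  set T := {p : Fin (N + 1) → S | ∃ i : Fin (N + 1), p i ∈ bad i}
  have hcover : {ω | ∃ m ≤ N, X m ω ∈ bad m}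
      ⊆ ⋃ p ∈ T, {ω | ∀ i : Fin (N + 1), X i ω = p i} := by
    rintro ω ⟨m, hm, hmem⟩
    exact Set.mem_biUnion (x := fun i : Fin (N + 1) => X i ω)
      (show ∃ i : Fin (N + 1), X i ω ∈ bad i from ⟨⟨m, by omega⟩, hmem⟩) fun _ => rfl
  calc Pr {ω | ∃ m ≤ N, X m ω ∈ bad m}
      ≤ ∑' p : T, Pr {ω | ∀ i : Fin (N + 1), X i ω = p.1 i} :=
        (measure_mono hcover).trans (measure_biUnion_le Pr T.to_countable _)
    _ = ∑' p, pathWeight K x p * T.indicator 1 p := by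
        simp only [hX.measure_cylinder K, tsum_subtype T (pathWeight K x)]
        exact tsum_congr fun p => by by_cases hp : p ∈ T <;> simp [hp]

end Copies

section Hitting

variable (K : S → PMF S) (B : Set S) (c : ℝ≥0∞)

def hitPaths (N : ℕ) : Set (Fin (N + 1) → S) :=
  {p | ∃ i : Fin (N + 1), c ≤ (stepDist K (p i) (N - i)).toOuterMeasure B}

lemma cons_mem_hitPaths_iff {N : ℕ} {x : S} (hx : ¬c ≤ (stepDist K x (N + 1)).toOuterMeasure B)
    (q : Fin (N + 1) → S) :
    (Fin.cons x q : Fin (N + 2) → S) ∈ hitPaths K B c (N + 1) ↔ q ∈ hitPaths K B c N := by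
  simp [hitPaths, Fin.exists_fin_succ, hx]

/-- Optional stopping for the space-time harmonic function `(m, s) ↦ P^(N-m)(s, B)`, stopped
when it first reaches `c`. -/
lemma mul_tsum_pathWeight_hitPaths_le (N : ℕ) (x : S) :
    c * ∑' p, pathWeight K x p * (hitPaths K B c N).indicator 1 p
      ≤ (stepDist K x N).toOuterMeasure B := by
  have hstart : ∀ {N x}, c ≤ (stepDist K x N).toOuterMeasure B →
      c * ∑' p, pathWeight K x p * (hitPaths K B c N).indicator 1 p
        ≤ (stepDist K x N).toOuterMeasure B := fun {N x} hx =>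
    calc _ ≤ c * ∑' p, pathWeight K x p := by
          gcongr with p
          exact mul_le_of_le_one_right' (Set.indicator_le_self _ _ p)
      _ = c := by rw [tsum_pathWeight, mul_one]
      _ ≤ _ := hx
  induction N generalizing x with
  | zero =>
    by_cases hx : c ≤ (stepDist K x 0).toOuterMeasure B
    · exact hstart hx
    · have hmiss : ∀ p, pathWeight K x p * (hitPaths K B c 0).indicator 1 p = 0 := fun p => by
        by_cases hp : p 0 = x
        · rw [Set.indicator_of_notMem (by simpa [hitPaths, hp] using hx), mul_zero]
        · rw [pathWeight_of_ne K hp, zero_mul]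
      simp [hmiss]
  | succ N ih =>
    by_cases hx : c ≤ (stepDist K x (N + 1)).toOuterMeasure B
    · exact hstart hx
    · have hcons : ∀ q : Fin (N + 1) → S,
          (hitPaths K B c (N + 1)).indicator (1 : (Fin (N + 2) → S) → ℝ≥0∞) (Fin.cons x q)
            = (hitPaths K B c N).indicator 1 q := fun q => by
        by_cases hq : q ∈ hitPaths K B c N
        · rw [Set.indicator_of_mem ((cons_mem_hitPaths_iff K B c hx q).2 hq),
            Set.indicator_of_mem hq]; rfl
        · rw [Set.indicator_of_notMem (mt (cons_mem_hitPaths_iff K B c hx q).1 hq),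
            Set.indicator_of_notMem hq]
      calc _ = ∑' s, K x s * (c * ∑' q, pathWeight K s q * (hitPaths K B c N).indicator 1 q) := by
            simp only [tsum_pathWeight_succ_mul, hcons, ← ENNReal.tsum_mul_left]
            exact tsum_congr fun s => tsum_congr fun q => mul_left_comm _ _ _
        _ ≤ ∑' s, K x s * (stepDist K s N).toOuterMeasure B := by gcongr with s; exact ih s
        _ = (stepDist K x (N + 1)).toOuterMeasure B := by
            rw [stepDist_succ', PMF.toOuterMeasure_bind_apply]

end Hitting

section Coupling

variable [Countable S] (K : S → PMF S) {Ω : Type*} [MeasurableSpace Ω] {Pr : Measure Ω}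
  {x y : S} {X Y : ℕ → Ω → S}

lemma IsCopy.mul_measure_hit_le (hX : IsCopy Pr K x X) (B : Set S) (c : ℝ≥0∞) (N : ℕ) :
    c * Pr {ω | ∃ m ≤ N, c ≤ (stepDist K (X m ω) (N - m)).toOuterMeasure B}
      ≤ (stepDist K x N).toOuterMeasure B :=
  (mul_le_mul_right (hX.measure_exists_mem_le K N
    fun m => {s | c ≤ (stepDist K s (N - m)).toOuterMeasure B}) c).trans
    (mul_tsum_pathWeight_hitPaths_le K B c N x)

lemma IsCopy.measure_meet_le (hX : IsCopy Pr K x X) (hY : IsCopy Pr K y Y) (N : ℕ)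
    (B : Set S) :
    Pr {ω | ∃ m ≤ N, X m ω = Y m ω}
      ≤ 2 * (stepDist K x N).toOuterMeasure Bᶜ + 2 * (stepDist K y N).toOuterMeasure B := by
  have hcover : {ω | ∃ m ≤ N, X m ω = Y m ω}
      ⊆ {ω | ∃ m ≤ N, 2⁻¹ ≤ (stepDist K (X m ω) (N - m)).toOuterMeasure Bᶜ}
        ∪ {ω | ∃ m ≤ N, 2⁻¹ ≤ (stepDist K (Y m ω) (N - m)).toOuterMeasure B} := by
    rintro ω ⟨m, hm, hmeet⟩
    by_contra hnot
    simp only [Set.mem_union, Set.mem_ofPred_eq, not_or, not_exists, not_and, not_le] at hnot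
    have h := ENNReal.add_lt_add (hnot.1 m hm) (hnot.2 m hm)
    rw [hmeet, add_comm, PMF.toOuterMeasure_add_compl, ENNReal.inv_two_add_inv_two] at h
    exact lt_irrefl _ h
  have hhalf : ∀ {a b : ℝ≥0∞}, 2⁻¹ * a ≤ b → a ≤ 2 * b := fun h => by
    rwa [ENNReal.mul_le_iff_le_inv (by norm_num) (by norm_num), inv_inv] at h
  exact (measure_mono hcover).trans ((measure_union_le _ _).trans (add_le_add
    (hhalf (hX.mul_measure_hit_le K Bᶜ 2⁻¹ N)) (hhalf (hY.mul_measure_hit_le K B 2⁻¹ N))))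

lemma IsCopy.tvDist_stepDist_le (hX : IsCopy Pr K x X) (hY : IsCopy Pr K y Y) {N : ℕ} {α : ℝ}
    (hα : 0 ≤ α) (hmeet : ENNReal.ofReal α ≤ Pr {ω | ∃ m ≤ N, X m ω = Y m ω}) :
    tvDist (stepDist K x N) (stepDist K y N) ≤ 1 - α / 2 := by
  refine tvDist_le_of_forall_sub_le fun B => ?_
  have hne : ∀ (μ : PMF S) (A : Set S), 2 * μ.toOuterMeasure A ≠ ⊤ := fun μ A =>
    ENNReal.mul_ne_top (by norm_num) (μ.toOuterMeasure_apply_ne_top A)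
  have h := ENNReal.toReal_mono (ENNReal.add_ne_top.2 ⟨hne _ _, hne _ _⟩)
    (hmeet.trans (hX.measure_meet_le K hY N B))
  rw [ENNReal.toReal_ofReal hα, ENNReal.toReal_add (hne _ _) (hne _ _), ENNReal.toReal_mul,
    ENNReal.toReal_mul] at h
  norm_num at h
  linarith [(stepDist K x N).toReal_toOuterMeasure_add_compl B]

end Coupling

end

lemma pow_natCeil_log_div_log_le {β ε : ℝ} (hβ₀ : 0 < β) (hβ₁ : β < 1) (hε : 0 < ε) :
    β ^ ⌈Real.log ε / Real.log β⌉₊ ≤ ε := by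
  have hlog : Real.log β < 0 := Real.log_neg hβ₀ hβ₁
  rw [← Real.log_le_log_iff (pow_pos hβ₀ _) hε, Real.log_pow]
  have := (div_le_iff_of_neg hlog).1 (Nat.le_ceil (Real.log ε / Real.log β))
  linarith

theorem mixing_time_bound_of_couplings {S : Type*} [Countable S] (K : S → PMF S) (π : PMF S)
    (hconv : ∀ μ₀ : PMF S,
      Tendsto (fun m => tvDist (stepDistFrom K μ₀ m) π) atTop (𝓝 0))
    (α : ℝ) (hα : α ∈ Set.Ioc (0 : ℝ) 1) (n : ℕ)
    (hcoup : ∀ x y : S, ∃ (Ω : Type) (_ : MeasurableSpace Ω) (Pr : Measure Ω),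
      IsProbabilityMeasure Pr ∧ ∃ X Y : ℕ → Ω → S, IsCopy Pr K x X ∧ IsCopy Pr K y Y ∧
        ENNReal.ofReal α ≤ Pr {ω | ∃ m ≤ n, X m ω = Y m ω}) :
    sInf {m : ℕ | (⨆ x : S, tvDist (stepDist K x m) π) ≤ 1 / 4}
      ≤ n * ⌈Real.log (1 / 4) / Real.log (1 - α / 2)⌉₊ := by
  obtain ⟨hα₀, hα₁⟩ := hα
  have hβ : 0 < 1 - α / 2 := by linarith
  have hpair : ∀ x y, tvDist (stepDist K x n) (stepDist K y n) ≤ 1 - α / 2 := fun x y => by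
    obtain ⟨Ω, _, Pr, -, X, Y, hX, hY, hmeet⟩ := hcoup x y
    exact hX.tvDist_stepDist_le K hY hα₀.le hmeet
  refine Nat.sInf_le (Real.iSup_le (fun x => ?_) (by norm_num))
  exact (tvDist_stepDist_mul_le K hconv hβ.le hpair x _).trans
    (pow_natCeil_log_div_log_le hβ (by linarith) (by norm_num))
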